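/- arXiv:1108.4762 — 7 statements merged into one kernel-verified Lean document; each statement's English description precedes it below -/
import Mathlib

section
/- Let n ≥ 2 be a natural number and let k be the smallest prime factor of n. Then D(n) ≤ n · log_k(n) / k, with equality if and only if n is a power of k. -/
/-!
Both sides are sums over the prime factors `p` of `n` with multiplicities `αₚ`:
`D n = Σ αₚ · n/p` and `n · log_k n / k = Σ αₚ · n/p · (p · log_k p / k)`.
For `p ≥ k > 1` the factor `p · log_k p / k` is at least `1`, and strictly so unless `p = k`;
hence the inequality, with equality exactly when `k` is the only prime factor of `n`.
-/

/-- The arithmetic derivative on `ℕ`: `D p = 1` for primes, `D (a*b) = D a * b + a * D b`;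
explicitly `D n = n * Σ αᵢ / pᵢ = Σ αᵢ * (n / pᵢ)` for `n = ∏ pᵢ ^ αᵢ`, and `D 0 = D 1 = 0`. -/
def arithDeriv (n : ℕ) : ℕ := ∑ p ∈ n.primeFactors, n.factorization p * (n / p)

open Finset Real

namespace Real

variable {k p : ℝ}

theorem le_mul_logb_self (hk : 1 < k) (hkp : k ≤ p) : p ≤ p * logb k p := by
  refine le_mul_of_one_le_right (by linarith) ?_
  rw [← logb_self_eq_one hk]
  exact logb_le_logb_of_le hk (by linarith) hkp

theorem one_le_mul_logb_div (hk : 1 < k) (hkp : k ≤ p) : 1 ≤ p * logb k p / k :=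
  (one_le_div (by linarith)).mpr (hkp.trans (le_mul_logb_self hk hkp))

theorem one_lt_mul_logb_div (hk : 1 < k) (hkp : k < p) : 1 < p * logb k p / k :=
  (one_lt_div (by linarith)).mpr (hkp.trans_le (le_mul_logb_self hk hkp.le))

theorem mul_logb_div_eq_one_iff (hk : 1 < k) (hkp : k ≤ p) : p * logb k p / k = 1 ↔ p = k := by
  refine ⟨fun h => ?_, fun h => ?_⟩
  · by_contra hne
    exact (one_lt_mul_logb_div hk (lt_of_le_of_ne hkp (Ne.symm hne))).ne' h
  · subst h
    rw [logb_self_eq_one hk, mul_one, div_self (by linarith)]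

end Real

theorem arithDeriv_eq_sum (n : ℕ) :
    (arithDeriv n : ℝ) = ∑ p ∈ n.primeFactors, n.factorization p * ((n : ℝ) / p) := by
  rw [arithDeriv, Nat.cast_sum]
  refine sum_congr rfl fun p hp => ?_
  rw [Nat.cast_mul, Nat.cast_div (Nat.dvd_of_mem_primeFactors hp)
    (Nat.cast_ne_zero.mpr (Nat.prime_of_mem_primeFactors hp).ne_zero)]

theorem mul_logb_div_eq_sum (n : ℕ) (k : ℝ) :
    n * logb k n / k =
      ∑ p ∈ n.primeFactors, n.factorization p * ((n : ℝ) / p) * (p * logb k p / k) := by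
  rw [logb_nat_eq_sum_factorization, Finsupp.sum, Nat.support_factorization, mul_sum, sum_div]
  refine sum_congr rfl fun p hp => ?_
  have hp0 : (p : ℝ) ≠ 0 := Nat.cast_ne_zero.mpr (Nat.prime_of_mem_primeFactors hp).ne_zero
  field_simp

section

variable (n : ℕ) {k : ℝ}

theorem arithDeriv_le_mul_logb_div (hk : 1 < k) (hkp : ∀ p ∈ n.primeFactors, k ≤ p) :
    (arithDeriv n : ℝ) ≤ n * logb k n / k := by
  rw [arithDeriv_eq_sum, mul_logb_div_eq_sum]
  refine sum_le_sum fun p hp => le_mul_of_one_le_right (by positivity) ?_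
  exact one_le_mul_logb_div hk (hkp p hp)

theorem arithDeriv_eq_mul_logb_div_iff (hk : 1 < k) (hkp : ∀ p ∈ n.primeFactors, k ≤ p) :
    (arithDeriv n : ℝ) = n * logb k n / k ↔ ∀ p ∈ n.primeFactors, (p : ℝ) = k := by
  rw [arithDeriv_eq_sum, mul_logb_div_eq_sum, sum_eq_sum_iff_of_le fun p hp =>
    le_mul_of_one_le_right (by positivity) (one_le_mul_logb_div hk (hkp p hp))]
  refine forall₂_congr fun p hp => ?_
  have hterm : 0 < (n.factorization p : ℝ) * ((n : ℝ) / p) := by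
    obtain ⟨hprime, hdvd, hn⟩ := Nat.mem_primeFactors.mp hp
    have := hprime.pos
    have := hprime.factorization_pos_of_dvd hn hdvd
    positivity
  rw [eq_comm, mul_eq_left₀ hterm.ne', mul_logb_div_eq_one_iff hk (hkp p hp)]

end

theorem Nat.forall_mem_primeFactors_eq_iff {n k : ℕ} (hn : n ≠ 0) (hk : k.Prime) :
    (∀ p ∈ n.primeFactors, p = k) ↔ ∃ e : ℕ, n = k ^ e := by
  refine ⟨fun h => ⟨_, Nat.eq_prime_pow_of_unique_prime_dvd hn fun hd hdn =>
    h _ (Nat.mem_primeFactors.mpr ⟨hd, hdn, hn⟩)⟩, ?_⟩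
  rintro ⟨e, rfl⟩ p hp
  exact (Nat.prime_dvd_prime_iff_eq (Nat.prime_of_mem_primeFactors hp) hk).mp
    ((Nat.prime_of_mem_primeFactors hp).dvd_of_dvd_pow (Nat.dvd_of_mem_primeFactors hp))

/-- For `n ≥ 2` with smallest prime factor `k`, `D n ≤ n * log_k n / k`, with equality
iff `n` is a power of `k`. -/
theorem stmt_3 (n : ℕ) (hn : 2 ≤ n) :
    (arithDeriv n : ℝ) ≤ n * Real.logb n.minFac n / n.minFac ∧
    ((arithDeriv n : ℝ) = n * Real.logb n.minFac n / n.minFac ↔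
      ∃ e : ℕ, n = n.minFac ^ e) := by
  have hk : n.minFac.Prime := Nat.minFac_prime (by omega)
  have hk1 : (1 : ℝ) < n.minFac := by exact_mod_cast hk.one_lt
  have hmin : ∀ p ∈ n.primeFactors, (n.minFac : ℝ) ≤ p := fun p hp => by
    exact_mod_cast Nat.minFac_le_of_dvd (Nat.prime_of_mem_primeFactors hp).two_le
      (Nat.dvd_of_mem_primeFactors hp)
  refine ⟨arithDeriv_le_mul_logb_div n hk1 hmin, ?_⟩
  rw [arithDeriv_eq_mul_logb_div_iff n hk1 hmin, ← Nat.forall_mem_primeFactors_eq_iff (by omega) hk]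
  simp only [Nat.cast_inj]
end

section
/- Let n ≥ 2 be a natural number which is a product of k primes counted with multiplicity (i.e., Ω(n) = k). Then D(n) ≥ k · n^{(k-1)/k}. -/
open ArithmeticFunction Finset
open scoped ArithmeticFunction.Omega

lemma cast_arithDeriv (n : ℕ) :
    (arithDeriv n : ℝ) = ∑ p ∈ n.primeFactors, (n.factorization p : ℝ) * ((n : ℝ) / p) := by
  rw [arithDeriv, Nat.cast_sum]
  refine sum_congr rfl fun p hp => ?_
  rw [Nat.cast_mul, Nat.cast_div (Nat.dvd_of_mem_primeFactors hp)
    (by exact_mod_cast (Nat.prime_of_mem_primeFactors hp).ne_zero)]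

lemma sum_factorization_eq_cardFactors (n : ℕ) :
    ∑ p ∈ n.primeFactors, n.factorization p = Ω n := by
  rw [cardFactors_eq_sum_factorization]
  rfl

lemma prod_div_rpow_factorization {n : ℕ} (hn : n ≠ 0) :
    ∏ p ∈ n.primeFactors, ((n : ℝ) / p) ^ (n.factorization p : ℝ) =
      (n : ℝ) ^ ((Ω n : ℝ) - 1) := by
  have hprod : ∏ p ∈ n.primeFactors, (p : ℝ) ^ n.factorization p = n := by
    exact_mod_cast Nat.prod_factorization_pow_eq_self hn
  simp only [Real.rpow_natCast, div_pow, prod_div_distrib, prod_pow_eq_pow_sum,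
    sum_factorization_eq_cardFactors, hprod]
  rw [Real.rpow_sub_one (by exact_mod_cast hn), Real.rpow_natCast]

/-- If `n ≥ 2` is a product of `k` primes counted with multiplicity (`Ω n = k`),
then `D n ≥ k * n ^ ((k-1)/k)`. -/
theorem stmt_4 (n k : ℕ) (hn : 2 ≤ n) (hk : n.primeFactorsList.length = k) :
    (k : ℝ) * (n : ℝ) ^ (((k : ℝ) - 1) / k) ≤ arithDeriv n := by
  rw [← cardFactors_apply] at hk
  subst hk
  have hΩ : (0 : ℝ) < Ω n := by exact_mod_cast cardFactors_pos_iff_one_lt.2 hn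
  have hweights : ∑ p ∈ n.primeFactors, (n.factorization p : ℝ) = Ω n := by
    exact_mod_cast sum_factorization_eq_cardFactors n
  have amgm := Real.geom_mean_le_arith_mean n.primeFactors (fun p => (n.factorization p : ℝ))
    (fun p => (n : ℝ) / p) (fun _ _ => by positivity) (hweights ▸ hΩ) (fun _ _ => by positivity)
  rw [prod_div_rpow_factorization (by omega), ← cast_arithDeriv, hweights,
    ← Real.rpow_mul (Nat.cast_nonneg n), ← div_eq_mul_inv, le_div_iff₀ hΩ] at amgm
  linarith
end

section
/- There exists exactly one function D : ℤ → ℤ with D(p) = 1 for every prime p, D(ab) = D(a)·b + a·D(b) for all integers a, b, and D(-x) = -D(x) for all integers x; its restriction to ℕ is the arithmetic derivative on ℕ. -/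
lemma arithDeriv_eq_factorization_sum (n : ℕ) :
    arithDeriv n = n.factorization.sum fun p k => k * (n / p) := by
  rw [Finsupp.sum, Nat.support_factorization, arithDeriv]

lemma factorization_sum_mul_div (a c : ℕ) :
    (a.factorization.sum fun p k => k * (a * c / p)) = arithDeriv a * c := by
  rw [arithDeriv_eq_factorization_sum, Finsupp.sum_mul]
  refine Finsupp.sum_congr fun p hp => ?_
  rw [Nat.support_factorization] at hp
  rw [Nat.mul_div_right_comm (Nat.dvd_of_mem_primeFactors hp), mul_assoc]

@[simp] lemma arithDeriv_zero : arithDeriv 0 = 0 := by simp [arithDeriv]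

lemma arithDeriv_prime {p : ℕ} (hp : p.Prime) : arithDeriv p = 1 := by
  simp [arithDeriv, hp.primeFactors, hp.factorization, Nat.div_self hp.pos]

lemma arithDeriv_mul (a b : ℕ) :
    arithDeriv (a * b) = arithDeriv a * b + a * arithDeriv b := by
  rcases eq_or_ne a 0 with rfl | ha
  · simp
  rcases eq_or_ne b 0 with rfl | hb
  · simp
  rw [arithDeriv_eq_factorization_sum, Nat.factorization_mul ha hb,
    Finsupp.sum_add_index' (fun _ => zero_mul _) (fun _ _ _ => add_mul _ _ _),
    factorization_sum_mul_div, mul_comm a b, factorization_sum_mul_div, mul_comm (arithDeriv b)]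

theorem eq_arithDeriv_of_leibniz {R : Type*} [CommRing R] {f : ℕ → R}
    (prime : ∀ p : ℕ, p.Prime → f p = 1) (leibniz : ∀ a b : ℕ, f (a * b) = f a * b + a * f b)
    (n : ℕ) : f n = arithDeriv n := by
  induction n using Nat.recOnMul with
  | zero => simpa using leibniz 0 0
  | one => simpa [arithDeriv] using leibniz 1 1
  | prime p hp => rw [prime p hp, arithDeriv_prime hp, Nat.cast_one]
  | mul a b ha hb => rw [leibniz, ha, hb, arithDeriv_mul]; push_cast; ring

lemma natCast_eq_arithDeriv_of_leibniz {D : ℤ → ℤ} (prime : ∀ p : ℕ, p.Prime → D p = 1)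
    (leibniz : ∀ a b : ℤ, D (a * b) = D a * b + a * D b) (n : ℕ) : D n = arithDeriv n :=
  eq_arithDeriv_of_leibniz (f := fun n : ℕ => D n) prime (fun a b => by simpa using leibniz a b) n

lemma Int.funext_of_odd {α : Type*} [Neg α] {f g : ℤ → α} (hf : f.Odd) (hg : g.Odd)
    (h : ∀ n : ℕ, f n = g n) : f = g := by
  funext x
  rcases Int.natAbs_eq x with hx | hx <;> rw [hx]
  · exact h _
  · rw [hf, hg, h]

noncomputable def intArithDeriv (x : ℤ) : ℤ := x.sign * arithDeriv x.natAbs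

lemma intArithDeriv_natCast (n : ℕ) : intArithDeriv n = arithDeriv n := by
  rcases eq_or_ne n 0 with rfl | hn
  · simp [intArithDeriv]
  · simp [intArithDeriv, Int.sign_natCast_of_ne_zero hn]

lemma intArithDeriv_prime {p : ℕ} (hp : p.Prime) : intArithDeriv p = 1 := by
  rw [intArithDeriv_natCast, arithDeriv_prime hp, Nat.cast_one]

lemma intArithDeriv_mul (a b : ℤ) :
    intArithDeriv (a * b) = intArithDeriv a * b + a * intArithDeriv b := by
  simp only [intArithDeriv, Int.natAbs_mul, arithDeriv_mul, Int.sign_mul]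
  push_cast
  linear_combination (a.sign * (arithDeriv a.natAbs : ℤ)) * Int.sign_mul_abs b +
    (b.sign * (arithDeriv b.natAbs : ℤ)) * Int.sign_mul_abs a

lemma intArithDeriv_neg (x : ℤ) : intArithDeriv (-x) = -intArithDeriv x := by
  simp [intArithDeriv, Int.sign_neg]

lemma eq_intArithDeriv_of_leibniz {D : ℤ → ℤ} (prime : ∀ p : ℕ, p.Prime → D p = 1)
    (leibniz : ∀ a b : ℤ, D (a * b) = D a * b + a * D b) (neg : ∀ x : ℤ, D (-x) = -D x) :
    D = intArithDeriv :=
  Int.funext_of_odd neg intArithDeriv_neg fun n => by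
    rw [natCast_eq_arithDeriv_of_leibniz prime leibniz, intArithDeriv_natCast]

/-- There is exactly one function `D : ℤ → ℤ` with `D p = 1` for primes, satisfying the
Leibniz rule, and odd; its restriction to `ℕ` is the arithmetic derivative on `ℕ`. -/
theorem stmt_6 :
    (∃! D : ℤ → ℤ, (∀ p : ℕ, p.Prime → D p = 1) ∧
      (∀ a b : ℤ, D (a * b) = D a * b + a * D b) ∧
      (∀ x : ℤ, D (-x) = -D x)) ∧
    (∀ D : ℤ → ℤ, ((∀ p : ℕ, p.Prime → D p = 1) ∧
        (∀ a b : ℤ, D (a * b) = D a * b + a * D b) ∧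
        (∀ x : ℤ, D (-x) = -D x)) →
      ∀ n : ℕ, D n = arithDeriv n) :=
  ⟨⟨intArithDeriv, ⟨fun _ => intArithDeriv_prime, intArithDeriv_mul, intArithDeriv_neg⟩,
      fun _ ⟨prime, leibniz, neg⟩ => eq_intArithDeriv_of_leibniz prime leibniz neg⟩,
    fun _ ⟨prime, leibniz, _⟩ => natCast_eq_arithDeriv_of_leibniz prime leibniz⟩
end

section
/- For every rational L there exists a rational x with 1/2 < x < 1 and D(x) ≥ L. -/
/-- The logarithmic arithmetic derivative `ld n = D n / n = Σ αᵢ / pᵢ` of a natural number. -/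
def natLogDeriv (n : ℕ) : ℚ := ∑ p ∈ n.primeFactors, (n.factorization p : ℚ) / p

/-- The arithmetic derivative on `ℚ`: the unique function with `D p = 1` for primes
satisfying the Leibniz rule `D (x*y) = D x * y + x * D y`; explicitly
`D (± a/b) = ± (D a * b - a * D b) / b²` for coprime naturals `a`, `b`. -/
def ratArithDeriv (q : ℚ) : ℚ := q * (natLogDeriv q.num.natAbs - natLogDeriv q.den)

/-!
Take `x = 3 ^ m / p` with `p` a Bertrand prime in `(3 ^ m, 2 * 3 ^ m)`. Then `1/2 < x < 1`, and
the logarithmic derivative of `x` is `m / 3 - 1 / p`, so `D x = x (m / 3 - 1 / p) ≥ (m - 1) / 6`,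
which is unbounded in `m`.
-/

lemma natLogDeriv_prime_pow {p : ℕ} (hp : p.Prime) {k : ℕ} (hk : k ≠ 0) :
    natLogDeriv (p ^ k) = k / p := by
  simp [natLogDeriv, Nat.primeFactors_prime_pow hk hp, hp.factorization_pow]

lemma natLogDeriv_prime {p : ℕ} (hp : p.Prime) : natLogDeriv p = 1 / p := by
  simpa using natLogDeriv_prime_pow hp one_ne_zero

lemma ratArithDeriv_natCast_div_natCast {a b : ℕ} (hb : b ≠ 0) (hab : a.Coprime b) :
    ratArithDeriv (a / b) = a / b * (natLogDeriv a - natLogDeriv b) := by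
  have hb0 : (0 : ℤ) < b := by exact_mod_cast Nat.pos_of_ne_zero hb
  have hnum := Rat.num_div_eq_of_coprime (a := a) hb0 (by simpa using hab)
  have hden := Rat.den_div_eq_of_coprime (a := a) hb0 (by simpa using hab)
  push_cast at hnum hden
  rw [ratArithDeriv, hnum, Int.natAbs_natCast, (by exact_mod_cast hden : ((a : ℚ) / b).den = b)]

lemma ratArithDeriv_prime_pow_div_prime {q p m : ℕ} (hq : q.Prime) (hp : p.Prime) (hqp : q ≠ p)
    (hm : m ≠ 0) : ratArithDeriv (q ^ m / p) = q ^ m / p * (m / q - 1 / p) := by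
  have hcop : (q ^ m).Coprime p := ((Nat.coprime_primes hq hp).mpr hqp).pow_left m
  simpa [natLogDeriv_prime_pow hq hm, natLogDeriv_prime hp] using
    ratArithDeriv_natCast_div_natCast hp.ne_zero hcop

lemma Nat.exists_prime_lt_and_lt_two_mul {n : ℕ} (hn : 2 ≤ n) :
    ∃ p, p.Prime ∧ n < p ∧ p < 2 * n := by
  obtain ⟨p, hp, hnp, hp2n⟩ := Nat.exists_prime_lt_and_le_two_mul n (by omega)
  refine ⟨p, hp, hnp, hp2n.lt_of_ne ?_⟩
  rintro rfl
  have := Nat.prime_mul_iff.mp hp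
  omega

/-- For every rational `L` there is a rational `x ∈ (1/2, 1)` with `D x ≥ L`. -/
theorem stmt_9 (L : ℚ) : ∃ x : ℚ, 1 / 2 < x ∧ x < 1 ∧ L ≤ ratArithDeriv x := by
  obtain ⟨m, hm0, hm⟩ : ∃ m : ℕ, m ≠ 0 ∧ 6 * L + 1 ≤ m := by
    obtain ⟨k, hk⟩ := exists_nat_ge (6 * L + 1)
    exact ⟨k + 1, k.succ_ne_zero, by push_cast; linarith⟩
  have h3m : 3 ≤ 3 ^ m := Nat.le_self_pow hm0 3
  obtain ⟨p, hp, h3p, hp3⟩ := Nat.exists_prime_lt_and_lt_two_mul (n := 3 ^ m) (by omega)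
  have hpQ : (0 : ℚ) < p := by exact_mod_cast hp.pos
  have h3pQ : (3 : ℚ) ^ m < p := by exact_mod_cast h3p
  have hp3Q : (p : ℚ) < 2 * 3 ^ m := by exact_mod_cast hp3
  have hx_half : 1 / 2 < (3 : ℚ) ^ m / p := by rw [lt_div_iff₀ hpQ]; linarith
  have hx_one : (3 : ℚ) ^ m / p < 1 := (div_lt_one hpQ).mpr h3pQ
  refine ⟨_, hx_half, hx_one, ?_⟩
  have hD := ratArithDeriv_prime_pow_div_prime Nat.prime_three hp (by omega) hm0
  push_cast at hD
  rw [hD]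
  have h1p : 1 / (p : ℚ) ≤ 1 / 3 := by
    gcongr
    exact_mod_cast h3m.trans h3p.le
  have hm1 : (1 : ℚ) ≤ m := by exact_mod_cast Nat.one_le_iff_ne_zero.mpr hm0
  have hlog_nonneg : 0 ≤ (m : ℚ) / 3 - 1 / p := by linarith
  calc L ≤ 1 / 2 * ((m : ℚ) / 3 - 1 / p) := by linarith
    _ ≤ 3 ^ m / p * (m / 3 - 1 / p) := by gcongr
end

section
/- Let a, b, k be positive rationals with a < b. If for every rational L there exists x in the open interval (a, b) with D(x) ≥ L, then for every rational L there exists y in the open interval (ka, kb) with D(y) ≥ L. -/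
/-! The shift by `k` works because of the Leibniz rule: `D (k x) = D k * x + k * D x`, and on
`(a, b)` the first term is at least `-|D k| * b`, so a large `D x` gives a large `D (k x)`.
The Leibniz rule itself comes from additivity of the logarithmic derivative `natLogDeriv`. -/

lemma natLogDeriv_mul {m n : ℕ} (hm : m ≠ 0) (hn : n ≠ 0) :
    natLogDeriv (m * n) = natLogDeriv m + natLogDeriv n := by
  have sum_eq (k : ℕ) : natLogDeriv k = k.factorization.sum fun p e => (e : ℚ) / p := by
    rw [natLogDeriv, Finsupp.sum, Nat.support_factorization]
  simp only [sum_eq, Nat.factorization_mul hm hn]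
  exact Finsupp.sum_add_index' (fun _ => by simp) (fun _ _ _ => by push_cast; ring)

lemma natLogDeriv_sub_eq_of_mul_eq {m n m' n' : ℕ} (hm : m ≠ 0) (hn : n ≠ 0) (hm' : m' ≠ 0)
    (hn' : n' ≠ 0) (h : m * n' = m' * n) :
    natLogDeriv m - natLogDeriv n = natLogDeriv m' - natLogDeriv n' := by
  have := congrArg natLogDeriv h
  rw [natLogDeriv_mul hm hn', natLogDeriv_mul hm' hn] at this
  linarith

lemma natAbs_num_ne_zero {q : ℚ} (hq : q ≠ 0) : q.num.natAbs ≠ 0 :=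
  Int.natAbs_ne_zero.2 (Rat.num_ne_zero.2 hq)

lemma ratArithDeriv_mul (q r : ℚ) :
    ratArithDeriv (q * r) = ratArithDeriv q * r + q * ratArithDeriv r := by
  rcases eq_or_ne q 0 with rfl | hq
  · simp [ratArithDeriv]
  rcases eq_or_ne r 0 with rfl | hr
  · simp [ratArithDeriv]
  have hnum_den : (q * r).num.natAbs * (q.den * r.den) =
      q.num.natAbs * r.num.natAbs * (q * r).den := by
    simpa [Int.natAbs_mul, mul_assoc] using congrArg Int.natAbs (Rat.mul_num_den' q r)
  have hlog := natLogDeriv_sub_eq_of_mul_eq (natAbs_num_ne_zero (mul_ne_zero hq hr))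
    (q * r).den_nz (mul_ne_zero (natAbs_num_ne_zero hq) (natAbs_num_ne_zero hr))
    (mul_ne_zero q.den_nz r.den_nz) hnum_den
  rw [natLogDeriv_mul (natAbs_num_ne_zero hq) (natAbs_num_ne_zero hr),
    natLogDeriv_mul q.den_nz r.den_nz] at hlog
  rw [ratArithDeriv, ratArithDeriv, ratArithDeriv, hlog]
  ring

lemma neg_abs_mul_le_mul {α : Type*} [Ring α] [LinearOrder α] [IsOrderedRing α]
    {c x b : α} (hx : 0 ≤ x) (hxb : x ≤ b) :
    -(|c| * b) ≤ c * x :=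
  calc -(|c| * b) ≤ -(|c| * x) := neg_le_neg (mul_le_mul_of_nonneg_left hxb (abs_nonneg c))
    _ = -|c * x| := by rw [abs_mul, abs_of_nonneg hx]
    _ ≤ c * x := neg_abs_le _

theorem stmt_11_general (a b k : ℚ) (ha : 0 < a) (hk : 0 < k)
    (h : ∀ L : ℚ, ∃ x : ℚ, a < x ∧ x < b ∧ L ≤ ratArithDeriv x) :
    ∀ L : ℚ, ∃ y : ℚ, k * a < y ∧ y < k * b ∧ L ≤ ratArithDeriv y := by
  intro L
  obtain ⟨x, hax, hxb, hDx⟩ := h ((L + |ratArithDeriv k| * b) / k)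
  refine ⟨k * x, mul_lt_mul_of_pos_left hax hk, mul_lt_mul_of_pos_left hxb hk, ?_⟩
  rw [div_le_iff₀' hk] at hDx
  have hDk := neg_abs_mul_le_mul (c := ratArithDeriv k) (ha.trans hax).le hxb.le
  rw [ratArithDeriv_mul]
  linarith

/-- If the open interval `(a, b)` of positive rationals contains elements of arbitrarily
large arithmetic derivative, then so does `(k*a, k*b)` for any positive rational `k`. -/
theorem stmt_11 (a b k : ℚ) (ha : 0 < a) (hb : 0 < b) (hk : 0 < k) (hab : a < b)
    (h : ∀ L : ℚ, ∃ x : ℚ, a < x ∧ x < b ∧ L ≤ ratArithDeriv x) :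
    ∀ L : ℚ, ∃ y : ℚ, k * a < y ∧ y < k * b ∧ L ≤ ratArithDeriv y :=
  stmt_11_general a b k ha hk h
end

section
/- For every positive natural number a, Λ(2^a) = 2^a; equivalently, for every natural number m < 2^a one has D(m) < D(2^a) = a · 2^{a-1}. -/
/-- `Λ n` is the smallest `m ≤ n` such that `D m = max (D 0, D 1, …, D n)`. -/
noncomputable def arithLambda (n : ℕ) : ℕ := sInf {m : ℕ | m ≤ n ∧ ∀ j ≤ n, arithDeriv j ≤ arithDeriv m}

/-!
Every prime is at least `2`, so `D n = Σ αₚ (n / p) ≤ Ω(n) · (n / 2)`, while `2 ^ Ω(n) ≤ n`.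
For `m < 2 ^ a` both factors are strictly smaller than for `2 ^ a`: `Ω(m) < a` and
`m / 2 < 2 ^ (a - 1)`. Hence `D m < a · 2 ^ (a - 1) = D (2 ^ a)`.
-/

open ArithmeticFunction
open scoped ArithmeticFunction.Omega

namespace ArithmeticFunction

theorem two_pow_cardFactors_le {n : ℕ} (hn : n ≠ 0) : 2 ^ Ω n ≤ n := by
  conv_rhs => rw [← Nat.prod_primeFactorsList hn]
  exact List.pow_card_le_prod _ _ fun p hp => (Nat.prime_of_mem_primeFactorsList hp).two_le

theorem cardFactors_lt_of_lt_two_pow {m a : ℕ} (ha : 1 ≤ a) (hm : m < 2 ^ a) : Ω m < a := by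
  rcases eq_or_ne m 0 with rfl | hm0
  · rw [cardFactors_zero]
    exact ha
  · exact (Nat.pow_lt_pow_iff_right one_lt_two).mp ((two_pow_cardFactors_le hm0).trans_lt hm)

end ArithmeticFunction

theorem arithDeriv_prime_pow {p : ℕ} (hp : p.Prime) (k : ℕ) :
    arithDeriv (p ^ k) = k * p ^ (k - 1) := by
  rcases k.eq_zero_or_pos with rfl | hk
  · simp [arithDeriv]
  · rw [arithDeriv, Nat.primeFactors_prime_pow hk.ne' hp, Finset.sum_singleton,
      hp.factorization_pow, Finsupp.single_eq_same,
      ← Nat.pow_div hk hp.pos, pow_one]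

theorem arithDeriv_le_cardFactors_mul (n : ℕ) : arithDeriv n ≤ Ω n * (n / 2) := by
  rw [arithDeriv, cardFactors_eq_sum_factorization, Finsupp.sum, Nat.support_factorization,
    Finset.sum_mul]
  exact Finset.sum_le_sum fun p hp => Nat.mul_le_mul_left _
    (Nat.div_le_div_left (Nat.prime_of_mem_primeFactors hp).two_le two_pos)

theorem arithDeriv_lt_of_lt_two_pow {m a : ℕ} (ha : 1 ≤ a) (hm : m < 2 ^ a) :
    arithDeriv m < arithDeriv (2 ^ a) := by
  have hhalf : m / 2 < 2 ^ (a - 1) := by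
    rw [Nat.div_lt_iff_lt_mul two_pos, ← pow_succ, Nat.sub_add_cancel ha]
    exact hm
  calc arithDeriv m ≤ Ω m * (m / 2) := arithDeriv_le_cardFactors_mul m
    _ < a * 2 ^ (a - 1) := Nat.mul_lt_mul'' (cardFactors_lt_of_lt_two_pow ha hm) hhalf
    _ = arithDeriv (2 ^ a) := (arithDeriv_prime_pow Nat.prime_two a).symm

theorem arithLambda_eq_self_of_forall_lt {n : ℕ}
    (h : ∀ m < n, arithDeriv m < arithDeriv n) : arithLambda n = n := by
  have hmem : n ∈ {m : ℕ | m ≤ n ∧ ∀ j ≤ n, arithDeriv j ≤ arithDeriv m} :=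
    ⟨le_rfl, fun j hj => hj.eq_or_lt.elim (fun hjn => hjn ▸ le_rfl) fun hjn => (h j hjn).le⟩
  refine le_antisymm (Nat.sInf_le hmem) (le_csInf ⟨n, hmem⟩ fun m ⟨_, hmax⟩ => ?_)
  by_contra! hlt
  exact (h m hlt).not_ge (hmax n le_rfl)

/-- For every positive `a`, `Λ (2^a) = 2^a`; equivalently every `m < 2^a` has
`D m < D (2^a) = a * 2^(a-1)`. -/
theorem stmt_17 (a : ℕ) (ha : 1 ≤ a) :
    arithLambda (2 ^ a) = 2 ^ a ∧
    (∀ m : ℕ, m < 2 ^ a → arithDeriv m < arithDeriv (2 ^ a)) ∧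
    arithDeriv (2 ^ a) = a * 2 ^ (a - 1) := by
  have hlt : ∀ m < 2 ^ a, arithDeriv m < arithDeriv (2 ^ a) :=
    fun _ hm => arithDeriv_lt_of_lt_two_pow ha hm
  exact ⟨arithLambda_eq_self_of_forall_lt hlt, hlt, arithDeriv_prime_pow Nat.prime_two a⟩
end

section
/- Fix a natural number m ≥ 1. For every natural number n ≥ 2, write n = 2^a · B with B odd, and suppose a < m. Then D(n) < n·(m·(1/2 − log_3(2)/3) + log_3(n)/3). Moreover, the function f(n) = n·(m·(1/2 − log_3(2)/3) + log_3(n)/3) − ⌊log_2 n⌋ · 2^{⌊log_2 n⌋ − 1} tends to −∞ as n → ∞; consequently, for all sufficiently large such n, D(2^{⌊log_2 n⌋}) > D(n). -/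
/-!
Write `D n = n * L n` with the logarithmic derivative `L n = Σ vₚ(n) / p`, which is additive.
For `n = 2 ^ a * B` with `B` odd, every prime factor of `B` is at least `3`, so
`L n = a / 2 + L B ≤ a / 2 + Ω(B) / 3 ≤ a / 2 + log₃ B / 3` because `3 ^ Ω(B) ≤ B`; this is below the
bound as soon as `a < m`. On the other side, with `k = ⌊log₂ n⌋` we have `D (2 ^ k) = k 2 ^ (k - 1)`,
which is at least `n (log₂ n - 1) / 4`, and `log₂ n / 4` beats `log₃ n / 3` by a positive multiple
of `log n` because `2 ^ 4 < 3 ^ 3`.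
-/

open Real Filter
open scoped ArithmeticFunction.Omega

noncomputable def arithLogDeriv (n : ℕ) : ℝ := n.factorization.sum fun p k => (k : ℝ) / p

theorem arithDeriv_eq_mul_arithLogDeriv (n : ℕ) : (arithDeriv n : ℝ) = n * arithLogDeriv n := by
  rw [arithDeriv, arithLogDeriv, Finsupp.sum, Nat.support_factorization, Finset.mul_sum,
    Nat.cast_sum]
  refine Finset.sum_congr rfl fun p hp => ?_
  have hp0 : (p : ℝ) ≠ 0 := by exact_mod_cast (Nat.prime_of_mem_primeFactors hp).ne_zero
  rw [Nat.cast_mul, Nat.cast_div (Nat.dvd_of_mem_primeFactors hp) hp0]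
  ring

theorem arithLogDeriv_mul {a b : ℕ} (ha : a ≠ 0) (hb : b ≠ 0) :
    arithLogDeriv (a * b) = arithLogDeriv a + arithLogDeriv b := by
  rw [arithLogDeriv, Nat.factorization_mul ha hb,
    Finsupp.sum_add_index' (by simp) fun _ _ _ => by push_cast; ring]
  rfl

theorem arithLogDeriv_prime_pow {p : ℕ} (hp : p.Prime) (k : ℕ) :
    arithLogDeriv (p ^ k) = k / p := by
  rw [arithLogDeriv, hp.factorization_pow, Finsupp.sum_single_index (by simp)]

theorem arithLogDeriv_le_cardFactors_div {n q : ℕ} (hq : 0 < q)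
    (h : ∀ p ∈ n.primeFactors, q ≤ p) : arithLogDeriv n ≤ Ω n / q := by
  rw [ArithmeticFunction.cardFactors_eq_sum_factorization, arithLogDeriv, Finsupp.sum,
    Finsupp.sum, Nat.cast_sum, Finset.sum_div]
  refine Finset.sum_le_sum fun p hp => ?_
  rw [Nat.support_factorization] at hp
  gcongr
  exact_mod_cast h p hp

theorem pow_cardFactors_le {n q : ℕ} (hn : n ≠ 0) (h : ∀ p ∈ n.primeFactors, q ≤ p) :
    q ^ Ω n ≤ n := by
  rw [ArithmeticFunction.cardFactors_apply]
  conv_rhs => rw [← Nat.prod_primeFactorsList hn]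
  exact List.pow_card_le_prod _ _ fun p hp =>
    h p (Nat.mem_primeFactors_iff_mem_primeFactorsList.mpr hp)

theorem arithLogDeriv_le_logb {n q : ℕ} (hq : 1 < q) (h : ∀ p ∈ n.primeFactors, q ≤ p) :
    arithLogDeriv n ≤ logb q n / q := by
  rcases eq_or_ne n 0 with rfl | hn
  · simp [arithLogDeriv]
  calc arithLogDeriv n ≤ Ω n / q := arithLogDeriv_le_cardFactors_div (by omega) h
    _ ≤ logb q n / q := by
      gcongr
      rw [le_logb_iff_rpow_le (by exact_mod_cast hq) (by positivity), rpow_natCast]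
      exact_mod_cast pow_cardFactors_le hn h

theorem arithLogDeriv_two_pow_mul_odd_le (a : ℕ) {B : ℕ} (hB : Odd B) :
    arithLogDeriv (2 ^ a * B) ≤ a / 2 + logb 3 B / 3 := by
  have hfactor : ∀ p ∈ B.primeFactors, 3 ≤ p := fun p hp => by
    have hodd := Nat.odd_iff.mp (hB.of_dvd_nat (Nat.dvd_of_mem_primeFactors hp))
    have := (Nat.prime_of_mem_primeFactors hp).two_le
    omega
  rw [arithLogDeriv_mul (by positivity) hB.pos.ne', arithLogDeriv_prime_pow Nat.prime_two]
  have hodd : arithLogDeriv B ≤ logb 3 B / 3 := by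
    exact_mod_cast arithLogDeriv_le_logb (by norm_num) hfactor
  linarith

theorem arithDeriv_lt_of_eq_two_pow_mul_odd {m n a B : ℕ} (hn : n = 2 ^ a * B) (hB : Odd B)
    (ham : a < m) :
    (arithDeriv n : ℝ) < n * (m * (1 / 2 - logb 3 2 / 3) + logb 3 n / 3) := by
  subst hn
  have hpos : (0 : ℝ) < (2 ^ a * B : ℕ) := by have := hB.pos; positivity
  have hlog : logb 3 (2 ^ a * B : ℕ) = a * logb 3 2 + logb 3 B := by
    push_cast
    rw [logb_mul (by positivity) (by exact_mod_cast hB.pos.ne'), logb_pow]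
  have hc : logb 3 2 < 1 := by
    rw [logb_lt_iff_lt_rpow (by norm_num) (by norm_num)]
    norm_num
  have hma : (a : ℝ) + 1 ≤ m := by exact_mod_cast ham
  rw [arithDeriv_eq_mul_arithLogDeriv, hlog]
  calc _ ≤ (2 ^ a * B : ℕ) * (a / 2 + logb 3 B / 3 : ℝ) :=
        mul_le_mul_of_nonneg_left (arithLogDeriv_two_pow_mul_odd_le a hB) hpos.le
    _ < _ := mul_lt_mul_of_pos_left (by nlinarith) hpos

theorem floor_logb_two_natCast (n : ℕ) : ⌊logb 2 n⌋ = Nat.log 2 n := by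
  exact_mod_cast (Real.floor_logb_natCast (b := 2) (Nat.cast_nonneg n)).trans
    (Int.log_natCast 2 n)

theorem arithDeriv_two_pow_log (n : ℕ) :
    (arithDeriv (2 ^ Nat.log 2 n) : ℝ) = ⌊logb 2 n⌋ * (2 : ℝ) ^ (⌊logb 2 n⌋ - 1) := by
  rw [floor_logb_two_natCast, arithDeriv_eq_mul_arithLogDeriv,
    arithLogDeriv_prime_pow Nat.prime_two, zpow_sub₀ two_ne_zero, zpow_natCast, zpow_one]
  push_cast
  ring

theorem logb_two_sub_one_mul_le_arithDeriv_two_pow_log (n : ℕ) :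
    (logb 2 n - 1) * n / 4 ≤ arithDeriv (2 ^ Nat.log 2 n) := by
  set k := Nat.log 2 n
  have hk : logb 2 n - 1 < k := by
    have := Int.lt_floor_add_one (logb 2 (n : ℝ))
    rw [floor_logb_two_natCast] at this
    push_cast at this
    linarith
  have hn : (n : ℝ) < 2 * 2 ^ k := by
    exact_mod_cast (pow_succ' 2 k) ▸ Nat.lt_pow_succ_log_self one_lt_two n
  rw [arithDeriv_eq_mul_arithLogDeriv, arithLogDeriv_prime_pow Nat.prime_two]
  push_cast
  calc (logb 2 n - 1) * n / 4 ≤ k * n / 4 := by gcongr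
    _ ≤ 2 ^ k * (k / 2) := by nlinarith [(Nat.cast_nonneg k : (0 : ℝ) ≤ k)]

theorem tendsto_mul_add_logb_three_sub_logb_two (C : ℝ) :
    Tendsto (fun x : ℝ => x * (C + logb 3 x / 3 - logb 2 x / 4)) atTop atBot := by
  have hlog : 4 * log 2 < 3 * log 3 := by
    rw [← log_rpow two_pos, ← log_rpow three_pos]
    exact log_lt_log (by positivity) (by norm_num)
  have hκ : 1 / (3 * log 3) - 1 / (4 * log 2) < 0 :=
    sub_neg.mpr (one_div_lt_one_div_of_lt (by positivity) hlog)
  have hrewrite : ∀ x, C + logb 3 x / 3 - logb 2 x / 4 =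
      C + (1 / (3 * log 3) - 1 / (4 * log 2)) * log x := fun x => by
    simp only [logb]
    ring
  simp only [hrewrite]
  exact tendsto_id.atTop_mul_atBot₀
    (tendsto_atBot_add_const_left _ C (tendsto_log_atTop.const_mul_atTop_of_neg hκ))

theorem tendsto_mul_add_logb_three_sub_arithDeriv_two_pow_log (M : ℝ) :
    Tendsto (fun n : ℕ => n * (M + logb 3 n / 3) - arithDeriv (2 ^ Nat.log 2 n))
      atTop atBot := by
  refine tendsto_atBot_mono (fun n => ?_)
    ((tendsto_mul_add_logb_three_sub_logb_two (M + 1 / 4)).comp tendsto_natCast_atTop_atTop)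
  have := logb_two_sub_one_mul_le_arithDeriv_two_pow_log n
  simp only [Function.comp_apply]
  linarith

theorem stmt_19_general (m : ℕ) :
    (∀ n a B : ℕ, 2 ≤ n → Odd B → n = 2 ^ a * B → a < m →
      (arithDeriv n : ℝ) <
        n * (m * (1 / 2 - Real.logb 3 2 / 3) + Real.logb 3 n / 3)) ∧
    Filter.Tendsto
      (fun n : ℕ =>
        (n : ℝ) * (m * (1 / 2 - Real.logb 3 2 / 3) + Real.logb 3 n / 3) -
          (⌊Real.logb 2 n⌋ : ℝ) * (2 : ℝ) ^ (⌊Real.logb 2 n⌋ - 1))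
      Filter.atTop Filter.atBot ∧
    (∃ N : ℕ, ∀ n a B : ℕ, N ≤ n → 2 ≤ n → Odd B → n = 2 ^ a * B → a < m →
      arithDeriv n < arithDeriv (2 ^ Nat.log 2 n)) := by
  have hlt : ∀ n a B : ℕ, 2 ≤ n → Odd B → n = 2 ^ a * B → a < m →
      (arithDeriv n : ℝ) < n * (m * (1 / 2 - logb 3 2 / 3) + logb 3 n / 3) :=
    fun _ _ _ _ hB hn ham => arithDeriv_lt_of_eq_two_pow_mul_odd hn hB ham
  have htendsto :=
    tendsto_mul_add_logb_three_sub_arithDeriv_two_pow_log (m * (1 / 2 - logb 3 2 / 3))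
  refine ⟨hlt, by simpa only [arithDeriv_two_pow_log] using htendsto, ?_⟩
  obtain ⟨N, hN⟩ := eventually_atTop.mp (htendsto.eventually_lt_atBot 0)
  refine ⟨N, fun n a B hNn hn hB heq ham => ?_⟩
  have hD := hlt n a B hn hB heq ham
  have hf := hN n hNn
  exact_mod_cast (by linarith : (arithDeriv n : ℝ) < arithDeriv (2 ^ Nat.log 2 n))

/-- Fix `m ≥ 1`. If `n = 2^a * B ≥ 2` with `B` odd and `a < m`, then
`D n < n * (m * (1/2 - log₃ 2 / 3) + log₃ n / 3)`; moreover
`f n = n * (m * (1/2 - log₃ 2 / 3) + log₃ n / 3) - ⌊log₂ n⌋ * 2 ^ (⌊log₂ n⌋ - 1)`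
tends to `-∞`, so for all sufficiently large such `n`, `D (2 ^ ⌊log₂ n⌋) > D n`. -/
theorem stmt_19 (m : ℕ) (hm : 1 ≤ m) :
    (∀ n a B : ℕ, 2 ≤ n → Odd B → n = 2 ^ a * B → a < m →
      (arithDeriv n : ℝ) <
        n * (m * (1 / 2 - Real.logb 3 2 / 3) + Real.logb 3 n / 3)) ∧
    Filter.Tendsto
      (fun n : ℕ =>
        (n : ℝ) * (m * (1 / 2 - Real.logb 3 2 / 3) + Real.logb 3 n / 3) -
          (⌊Real.logb 2 n⌋ : ℝ) * (2 : ℝ) ^ (⌊Real.logb 2 n⌋ - 1))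
      Filter.atTop Filter.atBot ∧
    (∃ N : ℕ, ∀ n a B : ℕ, N ≤ n → 2 ≤ n → Odd B → n = 2 ^ a * B → a < m →
      arithDeriv n < arithDeriv (2 ^ Nat.log 2 n)) :=
  stmt_19_general m
end
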